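/- Let g, f be formal power series over ℚ with g(0) = 1 and f = X·q where q(0) = 1, let M be the Riordan matrix of (g, f), let f̄ = X·q̄ (q̄(0) = 1) be the compositional inverse of f, and let P be the unique matrix with ∑_{j=0}^{n} M_{n,j}·P_{j,k} = M_{n+2,k} for all n, k. Then the generating function of column 1 of P satisfies X·q̄²·(g∘f̄)·(∑_{n≥0} P_{n,1}X^n) = (g∘f̄) − q̄, where g∘f̄ denotes substitution of f̄ into g. (Equivalently, the Z-sequence of the second production matrix of M has generating function X/f̄² − 1/(f̄·g(f̄)).) -/

import Mathlib

open PowerSeries Finset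

/-- The Riordan matrix of the pair `(g, f)`: entries `M n k = [Xⁿ] (g * fᵏ)`. -/
noncomputable def riordan (g f : PowerSeries ℚ) (n k : ℕ) : ℚ :=
  PowerSeries.coeff n (g * f ^ k)

/-- Substitution of the power series `a` (with zero constant term) into `f`,
i.e. the composite `f(a)`. -/
noncomputable def psSubst (a f : PowerSeries ℚ) : PowerSeries ℚ :=
  PowerSeries.mk fun n =>
    PowerSeries.coeff n
      (∑ i ∈ Finset.range (n + 1), PowerSeries.C (PowerSeries.coeff i f) * a ^ i)

namespace PSAux

variable {a b : PowerSeries ℚ}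

lemma coeff_psSubst (F : PowerSeries ℚ) (n : ℕ) :
    coeff n (psSubst a F) = coeff n ((trunc (n+1) F).eval₂ (C (R := ℚ)) a) := by
  rw [psSubst, coeff_mk, eval₂_trunc_eq_sum_range]

lemma coeff_eval₂_of_dvd (ha : constantCoeff a = 0) {p : Polynomial ℚ} {n : ℕ}
    (hp : (Polynomial.X : Polynomial ℚ) ^ (n+1) ∣ p) :
    coeff n (p.eval₂ (C (R := ℚ)) a) = 0 := by
  obtain ⟨s, rfl⟩ := hp
  rw [Polynomial.eval₂_mul, Polynomial.eval₂_X_pow]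
  have hX : (X : PowerSeries ℚ) ∣ a := X_dvd_iff.mpr ha
  have : (X : PowerSeries ℚ) ^ (n+1) ∣ a ^ (n+1) * (s.eval₂ (C (R := ℚ)) a) :=
    Dvd.dvd.mul_right (pow_dvd_pow_of_dvd hX _) _
  exact X_pow_dvd_iff.mp this n (Nat.lt_succ_self n)

lemma coeff_eval₂_trunc_coe (ha : constantCoeff a = 0) (p : Polynomial ℚ) (n : ℕ) :
    coeff n ((trunc (n+1) (p : PowerSeries ℚ)).eval₂ (C (R := ℚ)) a)
      = coeff n (p.eval₂ (C (R := ℚ)) a) := by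
  have hdvd : (Polynomial.X : Polynomial ℚ) ^ (n+1) ∣ (p - trunc (n+1) (p : PowerSeries ℚ)) := by
    rw [Polynomial.X_pow_dvd_iff]
    intro d hd
    rw [Polynomial.coeff_sub, coeff_trunc, if_pos hd, Polynomial.coeff_coe, sub_self]
  have h := coeff_eval₂_of_dvd ha hdvd
  rw [Polynomial.eval₂_sub, map_sub, sub_eq_zero] at h
  exact h.symm

end PSAux

namespace PSAux2
open PSAux

variable {a b : PowerSeries ℚ}

lemma coeff_psSubst_trunc (ha : constantCoeff a = 0) (F : PowerSeries ℚ) {v n : ℕ}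
    (h : v ≤ n) :
    coeff v (psSubst a F) = coeff v ((trunc (n+1) F).eval₂ (C (R := ℚ)) a) := by
  rw [coeff_psSubst, ← coeff_eval₂_trunc_coe ha (trunc (n+1) F) v,
    trunc_trunc_of_le _ (Nat.succ_le_succ h)]

lemma coeff_mul_congr {A A' B B' : PowerSeries ℚ} {n : ℕ}
    (hA : ∀ v ≤ n, coeff v A = coeff v A')
    (hB : ∀ v ≤ n, coeff v B = coeff v B') :
    coeff n (A * B) = coeff n (A' * B') := by
  rw [coeff_mul, coeff_mul]
  refine Finset.sum_congr rfl fun p hp => ?_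
  rw [Finset.HasAntidiagonal.mem_antidiagonal] at hp
  rw [hA p.1 (by omega), hB p.2 (by omega)]

lemma coeff_psSubst_congr {W W' : PowerSeries ℚ} {n : ℕ}
    (h : ∀ i ≤ n, coeff i W = coeff i W') :
    coeff n (psSubst b W) = coeff n (psSubst b W') := by
  simp only [psSubst, coeff_mk]
  congr 1
  refine Finset.sum_congr rfl fun i hi => ?_
  rw [h i (by simpa using Nat.lt_succ_iff.mp (Finset.mem_range.mp hi))]

lemma psSubst_C (c : ℚ) : psSubst b (C c) = C c := by
  ext n
  simp only [psSubst, coeff_mk]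
  rw [Finset.sum_congr rfl (fun i (hi : i ∈ range (n+1)) => by
    rw [coeff_C] : ∀ i ∈ range (n+1),
      C (coeff i (C c)) * b ^ i = C (if i = 0 then c else 0) * b ^ i)]
  simp [apply_ite (C (R := ℚ)), ite_mul, Finset.sum_ite_eq]

lemma psSubst_one : psSubst b (1 : PowerSeries ℚ) = 1 := by
  simpa using psSubst_C (b := b) 1

lemma psSubst_add (F G : PowerSeries ℚ) :
    psSubst b (F + G) = psSubst b F + psSubst b G := by
  ext n
  simp [psSubst, add_mul, Finset.sum_add_distrib]

lemma psSubst_X (hb : constantCoeff b = 0) : psSubst b X = b := by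
  ext n
  simp only [psSubst, coeff_mk]
  cases n with
  | zero => simpa using hb.symm
  | succ m =>
    rw [Finset.sum_congr rfl (fun i (hi : i ∈ range (m+2)) => by
      rw [coeff_X] : ∀ i ∈ range (m+2),
        C (coeff i X) * b ^ i = C (if i = 1 then 1 else 0) * b ^ i)]
    simp [apply_ite (C (R := ℚ)), ite_mul, Finset.sum_ite_eq]

lemma psSubst_X_left (F : PowerSeries ℚ) : psSubst X F = F := by
  ext n
  simp [psSubst, coeff_X_pow, Finset.sum_ite_eq, Nat.lt_succ_iff]

lemma psSubst_mul (hb : constantCoeff b = 0) (F G : PowerSeries ℚ) :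
    psSubst b (F * G) = psSubst b F * psSubst b G := by
  ext n
  rw [coeff_psSubst, ← trunc_trunc_mul_trunc, ← Polynomial.coe_mul,
    coeff_eval₂_trunc_coe hb, Polynomial.eval₂_mul]
  exact coeff_mul_congr (fun v hv => (coeff_psSubst_trunc hb F hv).symm)
    (fun v hv => (coeff_psSubst_trunc hb G hv).symm)

lemma psSubst_pow (hb : constantCoeff b = 0) (F : PowerSeries ℚ) (k : ℕ) :
    psSubst b (F ^ k) = psSubst b F ^ k := by
  induction k with
  | zero => simpa using psSubst_one
  | succ m ih => rw [pow_succ, psSubst_mul hb, ih, pow_succ]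

lemma psSubst_eval₂ (hb : constantCoeff b = 0) (p : Polynomial ℚ) (a' : PowerSeries ℚ) :
    psSubst b (p.eval₂ (C (R := ℚ)) a') = p.eval₂ (C (R := ℚ)) (psSubst b a') := by
  induction p using Polynomial.induction_on with
  | C c => rw [Polynomial.eval₂_C, Polynomial.eval₂_C, psSubst_C]
  | add p q hp hq => rw [Polynomial.eval₂_add, Polynomial.eval₂_add, psSubst_add, hp, hq]
  | monomial k c _ =>
    simp only [Polynomial.eval₂_mul, Polynomial.eval₂_C, Polynomial.eval₂_X_pow]
    rw [psSubst_mul hb, psSubst_C, psSubst_pow hb]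

lemma psSubst_assoc (ha : constantCoeff a = 0) (hb : constantCoeff b = 0)
    (F : PowerSeries ℚ) :
    psSubst b (psSubst a F) = psSubst (psSubst b a) F := by
  have hc : constantCoeff (psSubst b a) = 0 := by
    simp [psSubst, ← coeff_zero_eq_constantCoeff, coeff_mk, coeff_C, ha,
      coeff_zero_eq_constantCoeff]
  ext n
  rw [coeff_psSubst_congr (fun i hi => coeff_psSubst_trunc ha F hi),
    psSubst_eval₂ hb, coeff_psSubst_trunc hc F (le_refl n)]

end PSAux2


open PSAux PSAux2 in
theorem second_production_matrix_Z_sequence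
    (g q qbar : PowerSeries ℚ)
    (hg : constantCoeff g = 1) (hq : constantCoeff q = 1)
    (hqbar : constantCoeff qbar = 1)
    (hcomp : psSubst (X * qbar) (X * q) = X)
    (P : ℕ → ℕ → ℚ)
    (hP : ∀ n k, ∑ j ∈ range (n + 1), riordan g (X * q) n j * P j k
          = riordan g (X * q) (n + 2) k) :
    X * qbar ^ 2 * psSubst (X * qbar) g * PowerSeries.mk (fun n => P n 1)
      = psSubst (X * qbar) g - qbar := by
  set a : PowerSeries ℚ := X * q with ha_def
  set b : PowerSeries ℚ := X * qbar with hb_def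
  set Z : PowerSeries ℚ := PowerSeries.mk (fun n => P n 1) with hZ_def
  have ha : constantCoeff a = 0 := by simp [ha_def]
  have hb : constantCoeff b = 0 := by simp [hb_def]
  have key : X ^ 2 * (g * psSubst a Z) + X = g * a := by
    ext n
    match n with
    | 0 =>
      simp [ha_def, coeff_zero_eq_constantCoeff, map_mul]
    | 1 =>
      have h2 : coeff 1 (X ^ 2 * (g * psSubst a Z)) = 0 :=
        X_pow_dvd_iff.mp (Dvd.intro _ rfl) 1 one_lt_two
      have h3 : g * a = X * (g * q) := by rw [ha_def]; ring
      rw [map_add, h2, zero_add, h3, coeff_succ_X_mul, coeff_X,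
        coeff_zero_eq_constantCoeff, map_mul, hg, hq]
      simp
    | (n + 2) =>
      have h2 : coeff (n + 2) (X ^ 2 * (g * psSubst a Z)) = coeff n (g * psSubst a Z) :=
        coeff_X_pow_mul _ 2 n
      have h4 : coeff (n + 2) (X : PowerSeries ℚ) = 0 := by
        rw [coeff_X]; simp
      rw [map_add, h2, h4, add_zero]
      have h5 : coeff n (g * psSubst a Z)
          = coeff n (g * ((trunc (n+1) Z).eval₂ (C (R := ℚ)) a)) :=
        coeff_mul_congr (fun v _ => rfl) (fun v hv => coeff_psSubst_trunc ha Z hv)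
      rw [h5, eval₂_trunc_eq_sum_range, Finset.mul_sum, map_sum]
      have h6 : ∀ i ∈ range (n + 1),
          coeff n (g * (C (coeff i Z) * a ^ i))
            = riordan g a n i * P i 1 := by
        intro i _
        have : g * (C (coeff i Z) * a ^ i) = C (coeff i Z) * (g * a ^ i) := by ring
        rw [this, coeff_C_mul, hZ_def, coeff_mk, riordan, mul_comm]
      rw [Finset.sum_congr rfl h6, hP n 1, riordan, pow_one]
  have key2 := congrArg (psSubst b) key
  rw [psSubst_add, psSubst_mul hb, psSubst_mul hb, psSubst_pow hb, psSubst_X hb,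
    psSubst_mul hb, psSubst_assoc ha hb, hcomp, psSubst_X_left] at key2
  -- key2 : b ^ 2 * (psSubst b g * Z) + b = psSubst b g * a_subst
  have hX : (X : PowerSeries ℚ) ≠ 0 := X_ne_zero
  have hmain : X * (X * qbar ^ 2 * psSubst b g * Z + qbar) = X * (psSubst b g) := by
    calc X * (X * qbar ^ 2 * psSubst b g * Z + qbar)
        = b ^ 2 * (psSubst b g * Z) + b := by rw [hb_def]; ring
      _ = psSubst b g * X := key2
      _ = X * psSubst b g := by ring
  have := mul_left_cancel₀ hX hmain
  linear_combination this
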